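/- arXiv:2605.23284 — 2 statements merged into one kernel-verified Lean document; each statement's English description precedes it below -/
import Mathlib

section
/- Let C ≤ Mat_{n×m}(F_q) be a rank-metric code and let 0 ≤ r ≤ dim C. Then the r-th higher rank-weight enumerator satisfies W_C^(r)(x,y) = Σ_{J ≤ E} [dim C(J) choose r]_q · y^{dim J} · ∏_{i=0}^{n − dim J − 1}(x − q^i y), where W_C^(r)(x,y) = Σ_{D} x^{n − dim Supp(D)} y^{dim Supp(D)}, the sum being over all r-dimensional subcodes D of C. -/
set_option linter.unusedSectionVars false

open Finset Matrix

variable {F : Type} [Field F] [Fintype F]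

/-- The column space of a matrix: the span of its columns. -/
noncomputable def colspace {n m : ℕ} (M : Matrix (Fin n) (Fin m) F) :
    Submodule F (Fin n → F) :=
  Submodule.span F (Set.range Mᵀ)

lemma col_mem_colspace {n m : ℕ} (M : Matrix (Fin n) (Fin m) F) (j : Fin m) :
    Mᵀ j ∈ colspace M :=
  Submodule.subset_span ⟨j, rfl⟩

/-- `codeSub C J = C(J) = { M ∈ C : colspace M ≤ J }`, as a submodule. -/
noncomputable def codeSub {n m : ℕ} (C : Submodule F (Matrix (Fin n) (Fin m) F))
    (J : Submodule F (Fin n → F)) : Submodule F (Matrix (Fin n) (Fin m) F) where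
  carrier := {M | M ∈ C ∧ colspace M ≤ J}
  zero_mem' := ⟨C.zero_mem, by
    rw [colspace]
    refine Submodule.span_le.2 ?_
    rintro _ ⟨j, rfl⟩
    have h : (0 : Matrix (Fin n) (Fin m) F)ᵀ j = 0 := by
      funext i; simp
    rw [h]; exact J.zero_mem⟩
  add_mem' := by
    rintro A B ⟨hA, hA'⟩ ⟨hB, hB'⟩
    refine ⟨C.add_mem hA hB, ?_⟩
    rw [colspace]
    refine Submodule.span_le.2 ?_
    rintro _ ⟨j, rfl⟩
    have h : (A + B)ᵀ j = Aᵀ j + Bᵀ j := by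
      funext i; simp [Matrix.transpose_apply]
    rw [h]
    exact J.add_mem (hA' (col_mem_colspace A j)) (hB' (col_mem_colspace B j))
  smul_mem' := by
    rintro c A ⟨hA, hA'⟩
    refine ⟨C.smul_mem c hA, ?_⟩
    rw [colspace]
    refine Submodule.span_le.2 ?_
    rintro _ ⟨j, rfl⟩
    have h : (c • A)ᵀ j = c • (Aᵀ j) := by
      funext i; simp [Matrix.transpose_apply]
    rw [h]
    exact J.smul_mem c (hA' (col_mem_colspace A j))

/-- Higher rank-support of a subcode: the sum of the column spaces of its members. -/
noncomputable def Supp {n m : ℕ} (D : Submodule F (Matrix (Fin n) (Fin m) F)) :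
    Submodule F (Fin n → F) :=
  ⨆ M ∈ (D : Set (Matrix (Fin n) (Fin m) F)), colspace M

/-- The linear functional `x ↦ ∑ i, x i * y i` (standard inner product with `y`). -/
noncomputable def dotForm {n : ℕ} (y : Fin n → F) : (Fin n → F) →ₗ[F] F where
  toFun x := ∑ i, x i * y i
  map_add' a b := by simp [add_mul, Finset.sum_add_distrib]
  map_smul' c a := by simp [Finset.mul_sum, mul_assoc]

/-- Orthogonal complement w.r.t. the standard inner product on `F^n`. -/
noncomputable def perp {n : ℕ} (J : Submodule F (Fin n → F)) : Submodule F (Fin n → F) :=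
  ⨅ y ∈ (J : Set (Fin n → F)), LinearMap.ker (dotForm y)

/-- The linear functional `N ↦ Tr (M Nᵀ)`. -/
noncomputable def traceForm {n m : ℕ} (M : Matrix (Fin n) (Fin m) F) :
    Matrix (Fin n) (Fin m) F →ₗ[F] F where
  toFun N := Matrix.trace (M * Nᵀ)
  map_add' A B := by simp [Matrix.transpose_add, Matrix.mul_add]
  map_smul' c A := by simp [Matrix.transpose_smul, Matrix.mul_smul]

/-- The trace dual code. -/
noncomputable def dualCode {n m : ℕ} (C : Submodule F (Matrix (Fin n) (Fin m) F)) :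
    Submodule F (Matrix (Fin n) (Fin m) F) :=
  ⨅ M ∈ (C : Set (Matrix (Fin n) (Fin m) F)), LinearMap.ker (traceForm M)

/-- Gaussian binomial coefficient `[a choose r]_q` as a rational number. -/
noncomputable def gb (q : ℚ) (a r : ℕ) : ℚ :=
  ∏ i ∈ Finset.range r, (q ^ a - q ^ i) / (q ^ r - q ^ i)

/-- Gaussian binomial with integer upper argument:
`[a choose b]_q = ∏_{i=0}^{b-1} (q^{a-i}-1)/(q^{b-i}-1)`. -/
noncomputable def gbZ (q : ℚ) (a : ℤ) (b : ℕ) : ℚ :=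
  ∏ i ∈ Finset.range b, (q ^ (a - (i : ℤ)) - 1) / (q ^ ((b : ℤ) - (i : ℤ)) - 1)

section gbAlg
variable {q : ℚ}

lemma pow_lt_pow_q (hq : 1 < q) {i j : ℕ} (h : i < j) : q ^ i < q ^ j :=
  pow_lt_pow_right₀ hq h

lemma pow_sub_ne (hq : 1 < q) {i j : ℕ} (h : i < j) : q ^ j - q ^ i ≠ 0 :=
  sub_ne_zero.2 (pow_lt_pow_q hq h).ne'

lemma gb_zero_right (a : ℕ) : gb q a 0 = 1 := by simp [gb]

lemma gb_of_lt {a r : ℕ} (h : a < r) : gb q a r = 0 :=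
  Finset.prod_eq_zero (Finset.mem_range.2 h) (by simp)

lemma gb_self (hq : 1 < q) (a : ℕ) : gb q a a = 1 :=
  Finset.prod_eq_one fun i hi => div_self (pow_sub_ne hq (Finset.mem_range.1 hi))

noncomputable def ff (q : ℚ) (k : ℕ) : ℚ := ∏ j ∈ Finset.range k, (q ^ (j + 1) - 1)

lemma ff_succ (k : ℕ) : ff q (k + 1) = ff q k * (q ^ (k + 1) - 1) := Finset.prod_range_succ _ _

lemma one_lt_pow_q (hq : 1 < q) (k : ℕ) : (1:ℚ) < q ^ (k+1) := one_lt_pow₀ hq (Nat.succ_ne_zero k)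

lemma ff_ne_zero (hq : 1 < q) (k : ℕ) : ff q k ≠ 0 :=
  Finset.prod_ne_zero_iff.2 fun i _ => sub_ne_zero.2 (one_lt_pow_q hq i).ne'

lemma prod_telescope (h : r ≤ a) :
    ff q (a - r) * ∏ i ∈ Finset.range r, (q ^ (a - i) - 1) = ff q a := by
  induction r with
  | zero => simp
  | succ r ih =>
    have hr : r ≤ a := Nat.le_of_succ_le h
    rw [Finset.prod_range_succ, ← mul_assoc]
    have h1 : a - r = (a - (r+1)) + 1 := by omega
    have h2 : ff q (a - r) = ff q (a - (r+1)) * (q ^ (a - r) - 1) := by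
      rw [h1, ff_succ, ← h1]
    calc ff q (a - (r+1)) * (∏ i ∈ Finset.range r, (q ^ (a - i) - 1)) * (q ^ (a - r) - 1)
        = (ff q (a - (r+1)) * (q ^ (a - r) - 1)) * ∏ i ∈ Finset.range r, (q ^ (a - i) - 1) := by ring
      _ = ff q (a - r) * ∏ i ∈ Finset.range r, (q ^ (a - i) - 1) := by rw [← h2]
      _ = ff q a := ih hr

lemma gb_eq_ff (hq : 1 < q) {a r : ℕ} (h : r ≤ a) :
    gb q a r = ff q a / (ff q r * ff q (a - r)) := by
  have hq0 : q ≠ 0 := by positivity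
  have step : ∀ i ∈ Finset.range r, (q ^ a - q ^ i) / (q ^ r - q ^ i)
      = (q ^ (a - i) - 1) / (q ^ (r - i) - 1) := by
    intro i hi
    have hi' : i < r := Finset.mem_range.1 hi
    have e1 : q ^ a - q ^ i = q ^ i * (q ^ (a - i) - 1) := by
      rw [mul_sub, mul_one, ← pow_add, show i + (a - i) = a from by omega]
    have e2 : q ^ r - q ^ i = q ^ i * (q ^ (r - i) - 1) := by
      rw [mul_sub, mul_one, ← pow_add, show i + (r - i) = r from by omega]
    rw [e1, e2, mul_div_mul_left _ _ (pow_ne_zero i hq0)]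
  rw [gb, Finset.prod_congr rfl step, Finset.prod_div_distrib]
  have n1 : ∏ i ∈ Finset.range r, (q ^ (a - i) - 1) = ff q a / ff q (a - r) := by
    field_simp [ff_ne_zero hq]
    rw [mul_comm]; exact prod_telescope h
  have n2 : ∏ i ∈ Finset.range r, (q ^ (r - i) - 1) = ff q r := by
    have := prod_telescope (q := q) (le_refl r)
    simpa [ff] using this
  rw [n1, n2, div_div]
  ring_nf

lemma gb_pascal (hq : 1 < q) {u k : ℕ} (h : k ≤ u) :
    gb q (u + 1) (k + 1) = gb q u (k + 1) + q ^ (u - k) * gb q u k := by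
  rcases eq_or_lt_of_le h with rfl | hlt
  · rw [gb_self hq, gb_of_lt (Nat.lt_succ_self _), gb_self hq]; simp
  · obtain ⟨v, rfl⟩ : ∃ v, u = k + v + 1 := ⟨u - k - 1, by omega⟩
    have h1 : gb q (k + v + 1 + 1) (k + 1) = ff q (k+v+2) / (ff q (k+1) * ff q (v+1)) := by
      rw [gb_eq_ff hq (by omega), show k + v + 1 + 1 - (k+1) = v+1 from by omega,
        show k + v + 1 + 1 = k + v + 2 from by omega]
    have h2 : gb q (k + v + 1) (k + 1) = ff q (k+v+1) / (ff q (k+1) * ff q v) := by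
      rw [gb_eq_ff hq (by omega), show k + v + 1 - (k+1) = v from by omega]
    have h3 : gb q (k + v + 1) k = ff q (k+v+1) / (ff q k * ff q (v+1)) := by
      rw [gb_eq_ff hq (by omega), show k + v + 1 - k = v+1 from by omega]
    have hs : k + v + 1 - k = v + 1 := by omega
    rw [h1, h2, h3, hs]
    have e1 : ff q (k+v+2) = ff q (k+v+1) * (q ^ (k+v+2) - 1) := ff_succ _
    have e2 : ff q (v+1) = ff q v * (q ^ (v+1) - 1) := ff_succ _
    have e3 : ff q (k+1) = ff q k * (q ^ (k+1) - 1) := ff_succ _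
    have nk := ff_ne_zero hq k
    have nv := ff_ne_zero hq v
    have nkv := ff_ne_zero hq (k+v+1)
    have nq1 : q ^ (k+1) - 1 ≠ 0 := sub_ne_zero.2 (one_lt_pow_q hq k).ne'
    have nq2 : q ^ (v+1) - 1 ≠ 0 := sub_ne_zero.2 (one_lt_pow_q hq v).ne'
    rw [e1, e2, e3]
    field_simp
    ring

lemma star_identity (hq : 1 < q) (x y : ℚ) (u : ℕ) :
    ∑ k ∈ Finset.range (u + 1), gb q u k * y ^ k *
      ∏ i ∈ Finset.range (u - k), (x - q ^ i * y) = x ^ u := by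
  induction u with
  | zero => simp [gb]
  | succ u ih =>
    have hP : ∀ k, k ≤ u → (∏ i ∈ Finset.range (u+1-k), (x - q^i*y))
        = (∏ i ∈ Finset.range (u-k), (x - q^i*y)) * (x - q^(u-k)*y) := by
      intro k hk
      rw [show u+1-k = (u-k)+1 from by omega, Finset.prod_range_succ]
    calc ∑ k ∈ Finset.range (u+1+1), gb q (u+1) k * y ^ k *
            ∏ i ∈ Finset.range (u+1-k), (x - q ^ i * y)
        = (∑ k ∈ Finset.range (u+1), gb q (u+1) (k+1) * y ^ (k+1) *
            ∏ i ∈ Finset.range (u+1-(k+1)), (x - q ^ i * y))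
          + gb q (u+1) 0 * y ^ 0 * ∏ i ∈ Finset.range (u+1-0), (x - q ^ i * y) :=
          Finset.sum_range_succ' _ _
      _ = (∑ k ∈ Finset.range (u+1),
            (gb q u (k+1) * y ^ (k+1) * ∏ i ∈ Finset.range (u+1-(k+1)), (x - q ^ i * y)
             + gb q u k * y ^ k * (∏ i ∈ Finset.range (u-k), (x - q ^ i * y)) * (q^(u-k) * y)))
          + gb q u 0 * y ^ 0 * ∏ i ∈ Finset.range (u+1-0), (x - q ^ i * y) := by
          have e0 : gb q (u+1) 0 = gb q u 0 := by rw [gb_zero_right, gb_zero_right]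
          rw [e0]
          congr 1
          refine Finset.sum_congr rfl fun k hk => ?_
          have hk' : k ≤ u := Nat.lt_succ_iff.1 (Finset.mem_range.1 hk)
          rw [gb_pascal hq hk', show u+1-(k+1) = u-k from by omega]
          ring
      _ = ((∑ k ∈ Finset.range (u+1), gb q u (k+1) * y ^ (k+1) *
            ∏ i ∈ Finset.range (u+1-(k+1)), (x - q ^ i * y))
           + gb q u 0 * y ^ 0 * ∏ i ∈ Finset.range (u+1-0), (x - q ^ i * y))
          + ∑ k ∈ Finset.range (u+1), gb q u k * y ^ k *
            (∏ i ∈ Finset.range (u-k), (x - q ^ i * y)) * (q^(u-k) * y) := by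
          rw [Finset.sum_add_distrib]; ring
      _ = (∑ k ∈ Finset.range (u+1+1), gb q u k * y ^ k *
            ∏ i ∈ Finset.range (u+1-k), (x - q ^ i * y))
          + ∑ k ∈ Finset.range (u+1), gb q u k * y ^ k *
            (∏ i ∈ Finset.range (u-k), (x - q ^ i * y)) * (q^(u-k) * y) := by
          rw [← Finset.sum_range_succ' (fun k => gb q u k * y ^ k *
            ∏ i ∈ Finset.range (u+1-k), (x - q ^ i * y))]
      _ = (∑ k ∈ Finset.range (u+1), gb q u k * y ^ k *
            ∏ i ∈ Finset.range (u+1-k), (x - q ^ i * y))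
          + ∑ k ∈ Finset.range (u+1), gb q u k * y ^ k *
            (∏ i ∈ Finset.range (u-k), (x - q ^ i * y)) * (q^(u-k) * y) := by
          rw [Finset.sum_range_succ, gb_of_lt (Nat.lt_succ_self u)]
          ring
      _ = ∑ k ∈ Finset.range (u+1), (gb q u k * y ^ k *
            ∏ i ∈ Finset.range (u-k), (x - q ^ i * y)) * x := by
          rw [← Finset.sum_add_distrib]
          refine Finset.sum_congr rfl fun k hk => ?_
          have hk' : k ≤ u := Nat.lt_succ_iff.1 (Finset.mem_range.1 hk)
          rw [hP k hk']
          ring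
      _ = x ^ (u+1) := by rw [← Finset.sum_mul, ih]; ring

end gbAlg

section counting
variable {F : Type} [Field F] [Fintype F]

lemma card_subspaces (V : Type*) [AddCommGroup V] [Module F V] [Finite V] (k : ℕ) :
    (Nat.card {W : Submodule F V // Module.finrank F W = k} : ℚ)
      = gb (Fintype.card F) (Module.finrank F V) k := by
  classical
  have hq : (1:ℚ) < (Fintype.card F : ℚ) := by exact_mod_cast Fintype.one_lt_card
  set q : ℕ := Fintype.card F with hqdef
  set d : ℕ := Module.finrank F V with hddef
  rcases le_or_gt k d with hk | hk
  swap
  · have : IsEmpty {W : Submodule F V // Module.finrank F W = k} := by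
      constructor
      rintro ⟨W, hW⟩
      have := Submodule.finrank_le W
      omega
    rw [Nat.card_of_isEmpty, gb_of_lt hk]
    simp
  letI : Fintype V := Fintype.ofFinite V
  letI : Fintype (Submodule F V) := Fintype.ofFinite _
  have hA : Nat.card {s : Fin k → V // LinearIndependent F s}
      = ∏ i ∈ Finset.range k, (q ^ d - q ^ i) := by
    rw [card_linearIndependent (K := F) (V := V) hk]
    rw [Finset.prod_range fun i => q ^ d - q ^ i]
  have hWc : ∀ W : Submodule F V, Module.finrank F W = k →
      Nat.card {s : Fin k → ↥W // LinearIndependent F s}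
        = ∏ i ∈ Finset.range k, (q ^ k - q ^ i) := by
    intro W hWk
    rw [card_linearIndependent (K := F) (V := ↥W) (le_of_eq hWk.symm), hWk]
    rw [Finset.prod_range fun i => q ^ k - q ^ i]
  have key : (∏ i ∈ Finset.range k, (q ^ d - q ^ i))
      = Nat.card {W : Submodule F V // Module.finrank F W = k}
        * ∏ i ∈ Finset.range k, (q ^ k - q ^ i) := by
    rw [← hA, Nat.card_eq_fintype_card, Fintype.card_subtype]
    have hmaps : ∀ s ∈ Finset.univ.filter (fun s : Fin k → V => LinearIndependent F s),
        Submodule.span F (Set.range s) ∈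
          Finset.univ.filter (fun W : Submodule F V => Module.finrank F W = k) := by
      intro s hs
      rw [Finset.mem_filter] at hs ⊢
      refine ⟨Finset.mem_univ _, ?_⟩
      rw [finrank_span_eq_card hs.2, Fintype.card_fin]
    rw [Finset.card_eq_sum_card_fiberwise hmaps]
    have hconst : ∀ W ∈ Finset.univ.filter (fun W : Submodule F V => Module.finrank F W = k),
        ((Finset.univ.filter (fun s : Fin k → V => LinearIndependent F s)).filter
          (fun s => Submodule.span F (Set.range s) = W)).card
          = ∏ i ∈ Finset.range k, (q ^ k - q ^ i) := by
      intro W hWmem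
      rw [Finset.mem_filter] at hWmem
      have hWk := hWmem.2
      have hfiber : ((Finset.univ.filter (fun s : Fin k → V => LinearIndependent F s)).filter
          (fun s => Submodule.span F (Set.range s) = W)).card
          = Nat.card {s : Fin k → ↥W // LinearIndependent F s} := by
        rw [Nat.card_eq_fintype_card, Fintype.card_subtype]
        refine Finset.card_bij'
          (fun s hs => fun j => (⟨s j, ?_⟩ : ↥W))
          (fun t ht => fun j => (t j : V)) ?_ ?_ ?_ ?_
        · simp only [Finset.mem_filter] at hs
          exact hs.2 ▸ Submodule.subset_span ⟨j, rfl⟩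
        · intro s hs
          simp only [Finset.mem_filter] at hs ⊢
          refine ⟨Finset.mem_univ _, ?_⟩
          exact (hs.1.2 : LinearIndependent F s).of_comp W.subtype
        · intro t ht
          simp only [Finset.mem_filter] at ht ⊢
          have hli : LinearIndependent F (fun j => (t j : V)) :=
            ht.2.map' W.subtype (Submodule.ker_subtype W)
          refine ⟨⟨Finset.mem_univ _, hli⟩, ?_⟩
          have hle : Submodule.span F (Set.range fun j => (t j : V)) ≤ W := by
            rw [Submodule.span_le]
            rintro _ ⟨j, rfl⟩
            exact (t j).2
          refine Submodule.eq_of_le_of_finrank_le hle ?_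
          rw [finrank_span_eq_card hli, Fintype.card_fin, hWk]
        · intro s hs; rfl
        · intro t ht; funext j; exact Subtype.ext rfl
      rw [hfiber, hWc W hWk]
    rw [Finset.sum_congr rfl hconst, Finset.sum_const, smul_eq_mul,
      Nat.card_eq_fintype_card, Fintype.card_subtype]
  have hcast : ∀ a : ℕ, k ≤ a → ∀ i ∈ Finset.range k,
      ((q ^ a - q ^ i : ℕ) : ℚ) = (q:ℚ) ^ a - (q:ℚ) ^ i := by
    intro a ha i hi
    have : q ^ i ≤ q ^ a := Nat.pow_le_pow_right Fintype.card_pos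
      (le_trans (le_of_lt (Finset.mem_range.1 hi)) ha)
    push_cast [Nat.cast_sub this]
    ring
  have hkk : ((∏ i ∈ Finset.range k, (q ^ k - q ^ i) : ℕ) : ℚ)
      = ∏ i ∈ Finset.range k, ((q:ℚ) ^ k - (q:ℚ) ^ i) := by
    push_cast
    exact Finset.prod_congr rfl (hcast k le_rfl)
  have hdd : ((∏ i ∈ Finset.range k, (q ^ d - q ^ i) : ℕ) : ℚ)
      = ∏ i ∈ Finset.range k, ((q:ℚ) ^ d - (q:ℚ) ^ i) := by
    push_cast
    exact Finset.prod_congr rfl (hcast d hk)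
  have hne : (∏ i ∈ Finset.range k, ((q:ℚ) ^ k - (q:ℚ) ^ i)) ≠ 0 :=
    Finset.prod_ne_zero_iff.2 fun i hi => pow_sub_ne hq (Finset.mem_range.1 hi)
  have keyQ : (∏ i ∈ Finset.range k, ((q:ℚ) ^ d - (q:ℚ) ^ i))
      = (Nat.card {W : Submodule F V // Module.finrank F W = k} : ℚ)
        * ∏ i ∈ Finset.range k, ((q:ℚ) ^ k - (q:ℚ) ^ i) := by
    rw [← hdd, ← hkk, key]
    push_cast
    ring
  rw [gb, Finset.prod_div_distrib, eq_div_iff hne, ← keyQ]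

end counting

section geom
variable {F : Type} [Field F] [Fintype F]
open Module

noncomputable def subEquiv {V : Type*} [AddCommGroup V] [Module F V]
    (W₀ : Submodule F V) (r : ℕ) :
    {D : Submodule F V // D ≤ W₀ ∧ Module.finrank F D = r}
      ≃ {W : Submodule F ↥W₀ // Module.finrank F W = r} where
  toFun D := ⟨D.1.comap W₀.subtype, by
    rw [(Submodule.comapSubtypeEquivOfLe D.2.1).finrank_eq]
    exact D.2.2⟩
  invFun W := ⟨W.1.map W₀.subtype, Submodule.map_subtype_le W₀ W.1, by
    rw [Submodule.finrank_map_subtype_eq]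
    exact W.2⟩
  left_inv D := Subtype.ext (by
    show Submodule.map W₀.subtype (Submodule.comap W₀.subtype D.1) = D.1
    rw [Submodule.map_comap_subtype, inf_of_le_right D.2.1])
  right_inv W := Subtype.ext (by
    show Submodule.comap W₀.subtype (Submodule.map W₀.subtype W.1) = W.1
    exact Submodule.comap_map_eq_of_injective (Submodule.injective_subtype W₀) W.1)

lemma card_subspaces_le {V : Type*} [AddCommGroup V] [Module F V] [Finite V]
    (W₀ : Submodule F V) (r : ℕ) :
    (Nat.card {D : Submodule F V // D ≤ W₀ ∧ Module.finrank F D = r} : ℚ)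
      = gb (Fintype.card F) (Module.finrank F W₀) r := by
  rw [← card_subspaces (↥W₀) r]
  congr 1
  exact Nat.card_congr (subEquiv W₀ r)

lemma finrank_map_mkQ_add {V : Type*} [AddCommGroup V] [Module F V] [Finite V]
    (U J : Submodule F V) (h : U ≤ J) :
    Module.finrank F (J.map U.mkQ) + Module.finrank F U = Module.finrank F J := by
  have hrn := LinearMap.finrank_range_add_finrank_ker (U.mkQ.comp J.subtype)
  have hrange : LinearMap.range (U.mkQ.comp J.subtype) = J.map U.mkQ := by
    rw [LinearMap.range_comp, Submodule.range_subtype]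
  have hker : LinearMap.ker (U.mkQ.comp J.subtype) = U.comap J.subtype := by
    rw [LinearMap.ker_comp, Submodule.ker_mkQ]
  rw [hrange, hker] at hrn
  rw [← hrn, (Submodule.comapSubtypeEquivOfLe h).finrank_eq]

lemma key_sum' (Q : Type*) [AddCommGroup Q] [Module F Q] [Finite Q] (x y : ℚ) :
    (∑ᶠ J' : Submodule F Q, y ^ Module.finrank F J' *
        ∏ i ∈ Finset.range (Module.finrank F Q - Module.finrank F J'),
          (x - (Fintype.card F : ℚ) ^ i * y))
      = x ^ Module.finrank F Q := by
  classical
  have hq : (1:ℚ) < (Fintype.card F : ℚ) := by exact_mod_cast Fintype.one_lt_card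
  letI : Fintype (Submodule F Q) := Fintype.ofFinite _
  set u : ℕ := Module.finrank F Q with hu
  set q : ℚ := (Fintype.card F : ℚ) with hqq
  rw [finsum_eq_sum_of_fintype]
  have hmaps : ∀ J' ∈ (Finset.univ : Finset (Submodule F Q)),
      Module.finrank F J' ∈ Finset.range (u + 1) := by
    intro J' _
    rw [Finset.mem_range, Nat.lt_succ_iff]
    exact Submodule.finrank_le J'
  rw [← Finset.sum_fiberwise_of_maps_to hmaps
    (fun J' => y ^ Module.finrank F J' * ∏ i ∈ Finset.range (u - Module.finrank F J'),
      (x - q ^ i * y))]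
  have hterm : ∀ k ∈ Finset.range (u + 1),
      (∑ J' ∈ Finset.univ.filter (fun J' : Submodule F Q => Module.finrank F J' = k),
        y ^ Module.finrank F J' * ∏ i ∈ Finset.range (u - Module.finrank F J'),
          (x - q ^ i * y))
      = gb q u k * y ^ k * ∏ i ∈ Finset.range (u - k), (x - q ^ i * y) := by
    intro k _
    have hconst : ∀ J' ∈ Finset.univ.filter
        (fun J' : Submodule F Q => Module.finrank F J' = k),
        y ^ Module.finrank F J' * ∏ i ∈ Finset.range (u - Module.finrank F J'),
          (x - q ^ i * y)
        = y ^ k * ∏ i ∈ Finset.range (u - k), (x - q ^ i * y) := by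
      intro J' hJ'
      rw [(Finset.mem_filter.1 hJ').2]
    rw [Finset.sum_congr rfl hconst, Finset.sum_const, nsmul_eq_mul]
    have hcard : ((Finset.univ.filter
        (fun J' : Submodule F Q => Module.finrank F J' = k)).card : ℚ) = gb q u k := by
      rw [← Fintype.card_subtype, ← Nat.card_eq_fintype_card]
      exact card_subspaces Q k
    rw [hcard]
    ring
  rw [Finset.sum_congr rfl hterm]
  exact star_identity hq x y u

lemma key_sum {V : Type*} [AddCommGroup V] [Module F V] [Finite V]
    (U : Submodule F V) (x y : ℚ) :
    (∑ᶠ J ∈ {J : Submodule F V | U ≤ J},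
        y ^ Module.finrank F J *
          ∏ i ∈ Finset.range (Module.finrank F V - Module.finrank F J),
            (x - (Fintype.card F : ℚ) ^ i * y))
      = x ^ (Module.finrank F V - Module.finrank F U) * y ^ Module.finrank F U := by
  classical
  haveI : Finite (V ⧸ U) := Finite.of_surjective _ (Submodule.mkQ_surjective U)
  letI : Fintype (Submodule F V) := Fintype.ofFinite _
  letI : Fintype (Submodule F (V ⧸ U)) := Fintype.ofFinite _
  set q : ℚ := (Fintype.card F : ℚ) with hqq
  set s : ℕ := Module.finrank F U with hs
  set nV : ℕ := Module.finrank F V with hnV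
  have hset : ({J : Submodule F V | U ≤ J} : Set (Submodule F V))
      = ↑(Finset.univ.filter (fun J : Submodule F V => U ≤ J)) := by
    ext J; simp
  rw [hset, finsum_mem_coe_finset]
  have hquot : Module.finrank F (V ⧸ U) = nV - s := by
    have := Submodule.finrank_quotient_add_finrank U
    omega
  have step : (∑ J ∈ Finset.univ.filter (fun J : Submodule F V => U ≤ J),
      y ^ Module.finrank F J * ∏ i ∈ Finset.range (nV - Module.finrank F J),
        (x - q ^ i * y))
      = ∑ J' ∈ (Finset.univ : Finset (Submodule F (V ⧸ U))),
        (y ^ Module.finrank F J' * ∏ i ∈ Finset.range ((nV - s) - Module.finrank F J'),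
          (x - q ^ i * y)) * y ^ s := by
    refine Finset.sum_nbij' (fun J => J.map U.mkQ) (fun J' => J'.comap U.mkQ)
      ?_ ?_ ?_ ?_ ?_
    · intro J _; exact Finset.mem_univ _
    · intro J' _
      rw [Finset.mem_filter]
      refine ⟨Finset.mem_univ _, ?_⟩
      intro v hv
      show U.mkQ v ∈ J'
      have : U.mkQ v = 0 := by
        rw [Submodule.mkQ_apply, Submodule.Quotient.mk_eq_zero]
        exact hv
      rw [this]
      exact J'.zero_mem
    · intro J hJ
      have hUJ : U ≤ J := (Finset.mem_filter.1 hJ).2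
      show Submodule.comap U.mkQ (Submodule.map U.mkQ J) = J
      rw [Submodule.comap_map_mkQ, sup_eq_right.2 hUJ]
    · intro J' _
      show Submodule.map U.mkQ (Submodule.comap U.mkQ J') = J'
      exact Submodule.map_comap_eq_of_surjective (Submodule.mkQ_surjective U) J'
    · intro J hJ
      have hUJ : U ≤ J := (Finset.mem_filter.1 hJ).2
      have hfr := finrank_map_mkQ_add U J hUJ
      have h1 : Module.finrank F J = Module.finrank F (J.map U.mkQ) + s := by omega
      show y ^ Module.finrank F J * ∏ i ∈ Finset.range (nV - Module.finrank F J),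
          (x - q ^ i * y)
        = (y ^ Module.finrank F (J.map U.mkQ) *
            ∏ i ∈ Finset.range ((nV - s) - Module.finrank F (J.map U.mkQ)),
              (x - q ^ i * y)) * y ^ s
      rw [h1, show nV - (Module.finrank F (J.map U.mkQ) + s)
        = (nV - s) - Module.finrank F (J.map U.mkQ) from by omega, pow_add]
      ring
  rw [step, ← Finset.sum_mul, ← finsum_eq_sum_of_fintype, ← hquot,
    key_sum' (F := F) (V ⧸ U) x y, hquot]

lemma le_codeSub_iff {n m : ℕ} (C D : Submodule F (Matrix (Fin n) (Fin m) F))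
    (J : Submodule F (Fin n → F)) :
    D ≤ codeSub C J ↔ D ≤ C ∧ Supp D ≤ J := by
  constructor
  · intro h
    constructor
    · intro M hM; exact (h hM).1
    · rw [Supp]
      refine iSup_le fun M => iSup_le fun hM => ?_
      exact (h hM).2
  · rintro ⟨h1, h2⟩ M hM
    refine ⟨h1 hM, ?_⟩
    refine le_trans ?_ h2
    rw [Supp]
    exact le_iSup_of_le M (le_iSup_of_le hM le_rfl)

lemma supp_le_top_finrank {F : Type} [Field F] [Fintype F] {n m : ℕ}
    (D : Submodule F (Matrix (Fin n) (Fin m) F)) :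
    Module.finrank F (Supp D) ≤ n := by
  have := Submodule.finrank_le (Supp D)
  simpa using this

end geom

/-- Greene-type identity for the `r`-th higher rank-weight enumerator:
`W_C^(r)(x,y) = ∑_J [dim C(J) choose r]_q y^{dim J} ∏_{i=0}^{n-dim J-1}(x - q^i y)`. -/
theorem greene_type_identity (n m : ℕ)
    (C : Submodule F (Matrix (Fin n) (Fin m) F))
    (r : ℕ) (hr : r ≤ Module.finrank F C) (x y : ℚ) :
    (∑ᶠ D ∈ {D : Submodule F (Matrix (Fin n) (Fin m) F) |
        D ≤ C ∧ Module.finrank F D = r},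
        x ^ (n - Module.finrank F (Supp D)) * y ^ Module.finrank F (Supp D))
      = ∑ᶠ J : Submodule F (Fin n → F),
          gb (Fintype.card F) (Module.finrank F (codeSub C J)) r *
            y ^ Module.finrank F J *
            ∏ i ∈ Finset.range (n - Module.finrank F J),
              (x - (Fintype.card F : ℚ) ^ i * y) := by
  classical
  letI : Fintype (Submodule F (Matrix (Fin n) (Fin m) F)) := Fintype.ofFinite _
  letI : Fintype (Submodule F (Fin n → F)) := Fintype.ofFinite _
  set q : ℚ := (Fintype.card F : ℚ) with hqdef
  have hn : Module.finrank F (Fin n → F) = n := by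
    simp [Module.finrank_pi]
  set A : Finset (Submodule F (Matrix (Fin n) (Fin m) F)) :=
    Finset.univ.filter (fun D => D ≤ C ∧ Module.finrank F D = r) with hA
  have hsetL : {D : Submodule F (Matrix (Fin n) (Fin m) F) |
      D ≤ C ∧ Module.finrank F D = r} = ↑A := by
    ext D; simp [hA]
  rw [hsetL, finsum_mem_coe_finset, finsum_eq_sum_of_fintype]
  have hJterm : ∀ J ∈ (Finset.univ : Finset (Submodule F (Fin n → F))),
      gb q (Module.finrank F (codeSub C J)) r * y ^ Module.finrank F J *
        ∏ i ∈ Finset.range (n - Module.finrank F J), (x - q ^ i * y)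
      = ∑ _D ∈ Finset.univ.filter
          (fun D : Submodule F (Matrix (Fin n) (Fin m) F) =>
            (D ≤ C ∧ Module.finrank F D = r) ∧ Supp D ≤ J),
          y ^ Module.finrank F J *
            ∏ i ∈ Finset.range (n - Module.finrank F J), (x - q ^ i * y) := by
    intro J _
    have h1 : gb q (Module.finrank F (codeSub C J)) r
        = ((Finset.univ.filter
            (fun D : Submodule F (Matrix (Fin n) (Fin m) F) =>
              (D ≤ C ∧ Module.finrank F D = r) ∧ Supp D ≤ J)).card : ℚ) := by
      rw [← card_subspaces_le (codeSub C J) r]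
      congr 1
      rw [Nat.card_eq_fintype_card, Fintype.card_subtype]
      congr 1
      apply Finset.filter_congr
      intro D _
      rw [le_codeSub_iff]
      tauto
    rw [h1, Finset.sum_const, nsmul_eq_mul]
    ring
  rw [Finset.sum_congr rfl hJterm]
  have hswap : ∑ J ∈ (Finset.univ : Finset (Submodule F (Fin n → F))),
      ∑ _D ∈ Finset.univ.filter
        (fun D : Submodule F (Matrix (Fin n) (Fin m) F) =>
          (D ≤ C ∧ Module.finrank F D = r) ∧ Supp D ≤ J),
        y ^ Module.finrank F J *
          ∏ i ∈ Finset.range (n - Module.finrank F J), (x - q ^ i * y)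
      = ∑ D ∈ A, ∑ J ∈ Finset.univ.filter
          (fun J : Submodule F (Fin n → F) => Supp D ≤ J),
          y ^ Module.finrank F J *
            ∏ i ∈ Finset.range (n - Module.finrank F J), (x - q ^ i * y) := by
    simp only [Finset.sum_filter, hA]
    rw [Finset.sum_comm]
    refine Finset.sum_congr rfl fun D _ => ?_
    by_cases hD : D ≤ C ∧ Module.finrank F D = r
    · simp [hD]
    · simp [hD]
  rw [hswap]
  refine Finset.sum_congr rfl fun D _ => ?_
  have hkey := key_sum (F := F) (V := Fin n → F) (Supp D) x y
  have hset2 : {J : Submodule F (Fin n → F) | Supp D ≤ J}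
      = ↑(Finset.univ.filter (fun J : Submodule F (Fin n → F) => Supp D ≤ J)) := by
    ext J; simp
  rw [hset2, finsum_mem_coe_finset, hn] at hkey
  rw [hkey]
end

section
/- Let C ≤ Mat_{n×m}(F_q) be a rank-metric code of dimension k. For all integers 0 ≤ j ≤ n and 0 ≤ r ≤ k, the generalized binomial moments satisfy the MacWilliams-type identity B^(r)_C(j) = Σ_{ℓ=0}^{r} q^{ℓ(k − m(n−j) − r + ℓ)} [k − m(n−j) choose r−ℓ]_q · B^(ℓ)_{C^⊥}(n−j), where B^(r)_C(j) = Σ_{J ≤ F_q^n, dim J = j} [dim C(J) choose r]_q and C^⊥ is the trace dual code. -/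
set_option linter.unusedSectionVars false

open Finset Matrix

variable {F : Type} [Field F] [Fintype F]

/-- `B^(r)_C(j) = ∑_{dim J = j} [dim C(J) choose r]_q`. -/
noncomputable def Bcoef {n m : ℕ} (C : Submodule F (Matrix (Fin n) (Fin m) F))
    (r j : ℕ) : ℚ :=
  ∑ᶠ J ∈ {J : Submodule F (Fin n → F) | Module.finrank F J = j},
    gbZ (Fintype.card F) (Module.finrank F (codeSub C J)) r

/-!
For `J ≤ F^n` let `V_J` be the space of matrices whose columns lie in `J`, so `C(J) = C ⊓ V_J`.
The trace form identifies the orthogonal of `V_J` with `V_{J^⊥}`, hence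
`C^⊥(J^⊥) = C^⊥ ⊓ V_J^⊥ = (C ⊔ V_J)^⊥`, and counting dimensions gives
`dim C(J) = a + dim C^⊥(J^⊥)` with `a = k - m(n - j)`, an integer that may be negative.
The q-Vandermonde identity `[a + d choose r] = ∑ ℓ, q^{ℓ(a - r + ℓ)} [a choose r - ℓ] [d choose ℓ]`
holds for every integer `a` and natural `d` (induction on `d`, using both q-Pascal rules), so it
expands each summand of `B^(r)_C(j)`; summing over `J` and reindexing by the involution
`J ↦ J^⊥` turns the inner sums into `B^(ℓ)_{C^⊥}(n - j)`.
-/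

section GaussianBinomial

variable {q : ℚ}

@[simp] lemma gbZ_zero (a : ℤ) : gbZ q a 0 = 1 := by simp [gbZ]

lemma gbZ_eq_prod_div_prod (a : ℤ) (b : ℕ) :
    gbZ q a b = (∏ i ∈ range b, (q ^ (a - i) - 1)) / ∏ i ∈ range b, (q ^ ((i : ℤ) + 1) - 1) := by
  rw [gbZ, prod_div_distrib, ← prod_range_reflect (fun i : ℕ => q ^ ((i : ℤ) + 1) - 1)]
  refine congrArg _ (prod_congr rfl fun i hi => ?_)
  have := mem_range.1 hi
  congr 2
  omega

lemma gbZ_succ_right (a : ℤ) (b : ℕ) :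
    gbZ q a (b + 1) = gbZ q a b * ((q ^ (a - b) - 1) / (q ^ ((b : ℤ) + 1) - 1)) := by
  rw [gbZ_eq_prod_div_prod, gbZ_eq_prod_div_prod, prod_range_succ, prod_range_succ,
    mul_div_mul_comm]

lemma gbZ_succ_succ (a : ℤ) (b : ℕ) :
    gbZ q (a + 1) (b + 1) = gbZ q a b * ((q ^ (a + 1) - 1) / (q ^ ((b : ℤ) + 1) - 1)) := by
  rw [gbZ, prod_range_succ', gbZ]
  push_cast
  simp only [sub_zero]
  congr 1
  exact Finset.prod_congr rfl fun i _ => by ring_nf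

lemma gbZ_natCast_of_lt {c b : ℕ} (h : c < b) : gbZ q c b = 0 := by
  rw [gbZ]
  exact Finset.prod_eq_zero (mem_range.2 h) (by simp)

variable (hq : 1 < q)
include hq

lemma zpow_sub_one_ne_zero_of_one_lt {z : ℤ} (hz : 0 < z) : q ^ z - 1 ≠ 0 :=
  sub_ne_zero.2 (one_lt_zpow₀ hq hz).ne'

lemma gbZ_add_one_succ (a : ℤ) (b : ℕ) :
    gbZ q (a + 1) (b + 1) = gbZ q a (b + 1) + q ^ (a - b) * gbZ q a b := by
  have hden := zpow_sub_one_ne_zero_of_one_lt hq (z := (b : ℤ) + 1) (by omega)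
  have hpow : q ^ (a - b) * q ^ ((b : ℤ) + 1) = q ^ (a + 1) := by
    rw [← zpow_add₀ (by positivity)]; ring_nf
  rw [gbZ_succ_succ, gbZ_succ_right]
  field_simp
  linear_combination -(gbZ q a b) * hpow

lemma gbZ_add_one_succ' (a : ℤ) (b : ℕ) :
    gbZ q (a + 1) (b + 1) = q ^ ((b : ℤ) + 1) * gbZ q a (b + 1) + gbZ q a b := by
  have hden := zpow_sub_one_ne_zero_of_one_lt hq (z := (b : ℤ) + 1) (by omega)
  rw [gbZ_add_one_succ hq, gbZ_succ_right]
  field_simp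
  ring

lemma sum_gbZ_add_one_left (a : ℤ) (r : ℕ) (f : ℕ → ℚ) :
    ∑ ℓ ∈ range (r + 1), q ^ ((ℓ : ℤ) * (a + 1 - r + ℓ)) * gbZ q (a + 1) (r - ℓ) * f ℓ
      = ∑ ℓ ∈ range (r + 1), q ^ ((ℓ : ℤ) * (a + 1 - r + ℓ)) * gbZ q a (r - ℓ) * f ℓ
        + ∑ ℓ ∈ range r, q ^ (((ℓ : ℤ) + 1) * (a - r + ℓ + 1)) * gbZ q a (r - (ℓ + 1)) * f ℓ := by
  rw [sum_range_succ, sum_range_succ, Nat.sub_self, gbZ_zero, gbZ_zero, add_right_comm,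
    ← sum_add_distrib]
  congr 1
  refine Finset.sum_congr rfl fun ℓ hℓ => ?_
  obtain ⟨t, ht⟩ : ∃ t, r - ℓ = t + 1 := ⟨r - ℓ - 1, by have := mem_range.1 hℓ; omega⟩
  have hpow : q ^ ((ℓ : ℤ) * (a + 1 - r + ℓ)) * q ^ (a - t)
      = q ^ (((ℓ : ℤ) + 1) * (a - r + ℓ + 1)) := by
    have : (t : ℤ) = r - ℓ - 1 := by omega
    rw [← zpow_add₀ (by positivity), this]
    ring_nf
  rw [ht, show r - (ℓ + 1) = t by omega, gbZ_add_one_succ hq, ← hpow]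
  ring

lemma sum_gbZ_succ_right (a : ℤ) (d r : ℕ) :
    ∑ ℓ ∈ range (r + 1), q ^ ((ℓ : ℤ) * (a - r + ℓ)) * gbZ q a (r - ℓ) * gbZ q ((d + 1 : ℕ) : ℤ) ℓ
      = ∑ ℓ ∈ range (r + 1), q ^ ((ℓ : ℤ) * (a + 1 - r + ℓ)) * gbZ q a (r - ℓ) * gbZ q d ℓ
        + ∑ ℓ ∈ range r,
            q ^ (((ℓ : ℤ) + 1) * (a - r + ℓ + 1)) * gbZ q a (r - (ℓ + 1)) * gbZ q d ℓ := by
  rw [sum_range_succ', sum_range_succ', add_right_comm, ← sum_add_distrib]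
  congr 1
  · refine Finset.sum_congr rfl fun ℓ _ => ?_
    have hpow : q ^ (((ℓ : ℤ) + 1) * (a - r + ℓ + 1)) * q ^ ((ℓ : ℤ) + 1)
        = q ^ (((ℓ : ℤ) + 1) * (a + 1 - r + (ℓ + 1))) := by
      rw [← zpow_add₀ (by positivity)]
      ring_nf
    push_cast
    rw [gbZ_add_one_succ' hq, ← hpow]
    ring_nf
  · simp

theorem gbZ_add_natCast_eq_sum (a : ℤ) (d r : ℕ) :
    gbZ q (a + d) r
      = ∑ ℓ ∈ range (r + 1), q ^ ((ℓ : ℤ) * (a - r + ℓ)) * gbZ q a (r - ℓ) * gbZ q d ℓ := by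
  induction d generalizing a with
  | zero =>
    rw [sum_eq_single 0 (fun ℓ _ hℓ => by rw [gbZ_natCast_of_lt (by omega), mul_zero])
      (by simp)]
    simp
  | succ d ih =>
    rw [sum_gbZ_succ_right hq, ← sum_gbZ_add_one_left hq, ← ih (a + 1)]
    congr 1
    push_cast
    ring

end GaussianBinomial

namespace LinearMap.BilinForm

open Module

variable {K V : Type*} [Field K] [AddCommGroup V] [Module K V]

lemma orthogonal_sup (B : LinearMap.BilinForm K V) (U W : Submodule K V) :
    B.orthogonal (U ⊔ W) = B.orthogonal U ⊓ B.orthogonal W := by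
  refine le_antisymm (le_inf (orthogonal_le le_sup_left) (orthogonal_le le_sup_right)) ?_
  rintro x ⟨hU, hW⟩ y hy
  have : U ⊔ W ≤ LinearMap.ker (B.flip x) := sup_le (fun y hy => hU y hy) (fun y hy => hW y hy)
  exact this hy

theorem finrank_inf_add_finrank_eq [FiniteDimensional K V] {B : LinearMap.BilinForm K V}
    (hB : B.Nondegenerate) (U W : Submodule K V) :
    finrank K ↥(U ⊓ W) + finrank K V
      = finrank K ↥(B.orthogonal U ⊓ B.orthogonal W) + finrank K U + finrank K W := by
  rw [← orthogonal_sup, finrank_orthogonal hB]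
  have := Submodule.finrank_sup_add_finrank_inf_eq U W
  have := Submodule.finrank_le (U ⊔ W)
  omega

end LinearMap.BilinForm

lemma finsum_mem_finsetSum_comm {α β M : Type*} [AddCommMonoid M] {s : Set α} (hs : s.Finite)
    (t : Finset β) (f : α → β → M) :
    ∑ᶠ a ∈ s, ∑ b ∈ t, f a b = ∑ b ∈ t, ∑ᶠ a ∈ s, f a b := by
  lift s to Finset α using hs
  simp only [finsum_mem_coe_finset]
  exact Finset.sum_comm

section Forms

variable {K ι κ : Type*} [CommRing K] [Fintype ι] [Fintype κ]

lemma dotProductBilin_isSymm :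
    LinearMap.BilinForm.IsSymm (dotProductBilin K K : LinearMap.BilinForm K (ι → K)) :=
  ⟨fun x y => dotProduct_comm x y⟩

lemma dotProductBilin_nondegenerate :
    (dotProductBilin K K : LinearMap.BilinForm K (ι → K)).Nondegenerate := by
  classical
  refine (LinearMap.IsRefl.nondegenerate_iff_separatingLeft
    (B := (dotProductBilin K K : LinearMap.BilinForm K (ι → K)))
    dotProductBilin_isSymm.isRefl).2 fun x hx => ?_
  funext i
  simpa using hx (Pi.single i 1)

variable (K) in
noncomputable def traceBilin : LinearMap.BilinForm K (Matrix ι κ K) :=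
  LinearMap.mk₂ K (fun M N => trace (M * Nᵀ))
    (fun _ _ _ => by simp [Matrix.add_mul]) (fun _ _ _ => by simp [Matrix.smul_mul])
    (fun _ _ _ => by simp [Matrix.mul_add]) (fun _ _ _ => by simp [Matrix.mul_smul])

lemma traceBilin_apply (M N : Matrix ι κ K) : traceBilin K M N = ∑ l, Mᵀ l ⬝ᵥ Nᵀ l := by
  simp only [traceBilin, LinearMap.mk₂_apply, trace, Matrix.diag, mul_apply, dotProduct,
    transpose_apply]
  exact Finset.sum_comm

lemma traceBilin_isSymm : (traceBilin K : LinearMap.BilinForm K (Matrix ι κ K)).IsSymm :=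
  ⟨fun M N => by simp only [traceBilin_apply, dotProduct_comm]⟩

lemma traceBilin_nondegenerate :
    (traceBilin K : LinearMap.BilinForm K (Matrix ι κ K)).Nondegenerate := by
  classical
  refine (LinearMap.IsRefl.nondegenerate_iff_separatingLeft (B := traceBilin K)
    traceBilin_isSymm.isRefl).2 fun M hM => ?_
  ext i l
  simpa [traceBilin, transpose_single, trace_mul_single] using hM (single i l 1)

end Forms

section Codes

open Module

variable {n m : ℕ}

lemma colspace_le_iff (M : Matrix (Fin n) (Fin m) F) (J : Submodule F (Fin n → F)) :
    colspace M ≤ J ↔ ∀ l, Mᵀ l ∈ J := by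
  rw [colspace, Submodule.span_le]
  exact Set.range_subset_iff

lemma mem_codeSub_top {J : Submodule F (Fin n → F)} {M : Matrix (Fin n) (Fin m) F} :
    M ∈ codeSub ⊤ J ↔ ∀ l, Mᵀ l ∈ J := by
  simp [codeSub, colspace_le_iff]

lemma codeSub_eq_inf (C : Submodule F (Matrix (Fin n) (Fin m) F)) (J : Submodule F (Fin n → F)) :
    codeSub C J = C ⊓ codeSub ⊤ J := by
  ext M
  simp [codeSub, colspace_le_iff]

lemma mem_perp {J : Submodule F (Fin n → F)} {x : Fin n → F} :
    x ∈ perp J ↔ ∀ y ∈ J, y ⬝ᵥ x = 0 := by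
  simp only [perp, Submodule.mem_iInf, LinearMap.mem_ker]
  exact forall₂_congr fun y _ => by rw [dotProduct_comm]; rfl

lemma perp_eq_orthogonal (J : Submodule F (Fin n → F)) :
    perp J = LinearMap.BilinForm.orthogonal (dotProductBilin F F) J := by
  ext x
  rw [mem_perp, LinearMap.BilinForm.mem_orthogonal_iff]
  rfl

lemma dualCode_eq_orthogonal (C : Submodule F (Matrix (Fin n) (Fin m) F)) :
    dualCode C = (traceBilin F).orthogonal C := by
  ext N
  simp only [dualCode, Submodule.mem_iInf, LinearMap.mem_ker,
    LinearMap.BilinForm.mem_orthogonal_iff]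
  rfl

lemma finrank_perp (J : Submodule F (Fin n → F)) : finrank F (perp J) = n - finrank F J := by
  rw [perp_eq_orthogonal, LinearMap.BilinForm.finrank_orthogonal dotProductBilin_nondegenerate,
    finrank_fin_fun]

lemma perp_perp (J : Submodule F (Fin n → F)) : perp (perp J) = J := by
  rw [perp_eq_orthogonal, perp_eq_orthogonal, LinearMap.BilinForm.orthogonal_orthogonal
    dotProductBilin_nondegenerate dotProductBilin_isSymm.isRefl]

noncomputable def codeSubTopEquiv (J : Submodule F (Fin n → F)) :
    codeSub (⊤ : Submodule F (Matrix (Fin n) (Fin m) F)) J ≃ₗ[F] (Fin m → J) where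
  toFun M l := ⟨(M : Matrix (Fin n) (Fin m) F)ᵀ l, mem_codeSub_top.1 M.2 l⟩
  map_add' _ _ := rfl
  map_smul' _ _ := rfl
  invFun f := ⟨(Matrix.of fun l => (f l : Fin n → F))ᵀ, mem_codeSub_top.2 fun l => (f l).2⟩
  left_inv _ := rfl
  right_inv _ := rfl

lemma finrank_codeSub_top (J : Submodule F (Fin n → F)) :
    finrank F (codeSub (⊤ : Submodule F (Matrix (Fin n) (Fin m) F)) J) = m * finrank F J := by
  rw [(codeSubTopEquiv J).finrank_eq, finrank_pi_fintype, sum_const, card_univ, Fintype.card_fin,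
    smul_eq_mul]

lemma orthogonal_codeSub_top (J : Submodule F (Fin n → F)) :
    (traceBilin F).orthogonal (codeSub (⊤ : Submodule F (Matrix (Fin n) (Fin m) F)) J)
      = codeSub ⊤ (perp J) := by
  ext N
  simp only [LinearMap.BilinForm.mem_orthogonal_iff, mem_codeSub_top, mem_perp, traceBilin_apply]
  constructor
  · intro h l y hy
    have hM : ∀ l', (Matrix.of (Pi.single l y))ᵀᵀ l' ∈ J := fun l' => by
      change (Pi.single l y : Fin m → Fin n → F) l' ∈ J
      rcases eq_or_ne l' l with rfl | hl
      · rwa [Pi.single_eq_same]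
      · rw [Pi.single_eq_of_ne hl]
        exact J.zero_mem
    have := h _ hM
    change ∑ l', (Pi.single l y : Fin m → Fin n → F) l' ⬝ᵥ Nᵀ l' = 0 at this
    rwa [sum_eq_single l (fun l' _ hl => by rw [Pi.single_eq_of_ne hl, zero_dotProduct])
      (by simp), Pi.single_eq_same] at this
  · intro h M hM
    exact sum_eq_zero fun l _ => h l _ (hM l)

theorem finrank_codeSub_eq (C : Submodule F (Matrix (Fin n) (Fin m) F))
    (J : Submodule F (Fin n → F)) :
    (finrank F (codeSub C J) : ℤ)
      = finrank F C - m * (n - finrank F J) + finrank F (codeSub (dualCode C) (perp J)) := by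
  have h := LinearMap.BilinForm.finrank_inf_add_finrank_eq traceBilin_nondegenerate C
    (codeSub ⊤ J)
  rw [← codeSub_eq_inf, ← dualCode_eq_orthogonal, orthogonal_codeSub_top, ← codeSub_eq_inf,
    finrank_codeSub_top, finrank_matrix, finrank_self] at h
  simp only [Fintype.card_fin, mul_one] at h
  zify at h
  linear_combination h

lemma Bcoef_sub_eq_finsum_perp (D : Submodule F (Matrix (Fin n) (Fin m) F))
    {j : ℕ} (hj : j ≤ n) (ℓ : ℕ) :
    Bcoef D ℓ (n - j) = ∑ᶠ J ∈ {J : Submodule F (Fin n → F) | finrank F J = j},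
      gbZ (Fintype.card F) (finrank F (codeSub D (perp J))) ℓ := by
  have hmaps : ∀ {a b : ℕ}, b = n - a → Set.MapsTo perp
      {J : Submodule F (Fin n → F) | finrank F J = a} {J | finrank F J = b} :=
    fun h J (hJ : finrank F J = _) => by
      change finrank F (perp J) = _
      rw [finrank_perp, hJ, h]
  refine (finsum_mem_eq_of_bijOn perp (Set.InvOn.bijOn ⟨fun J _ => perp_perp J,
    fun J _ => perp_perp J⟩ (hmaps rfl) (hmaps (by omega))) fun _ _ => rfl).symm

end Codes

theorem macwilliams_binomial_moments_general (n m : ℕ)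
    (C : Submodule F (Matrix (Fin n) (Fin m) F)) (k : ℕ)
    (hk : Module.finrank F C = k) (j r : ℕ) (hj : j ≤ n) :
    Bcoef C r j
      = ∑ ℓ ∈ Finset.range (r + 1),
          (Fintype.card F : ℚ) ^
              ((ℓ : ℤ) * ((k : ℤ) - (m : ℤ) * ((n : ℤ) - (j : ℤ)) - (r : ℤ) + (ℓ : ℤ))) *
            gbZ (Fintype.card F) ((k : ℤ) - (m : ℤ) * ((n : ℤ) - (j : ℤ))) (r - ℓ) *
            Bcoef (dualCode C) ℓ (n - j) := by
  have hq : (1 : ℚ) < Fintype.card F := mod_cast Fintype.one_lt_card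
  have hterm : ∀ J ∈ {J : Submodule F (Fin n → F) | Module.finrank F J = j},
      gbZ (Fintype.card F) (Module.finrank F (codeSub C J)) r
        = ∑ ℓ ∈ range (r + 1),
            (Fintype.card F : ℚ) ^ ((ℓ : ℤ) * ((k : ℤ) - m * (n - j) - r + ℓ)) *
              gbZ (Fintype.card F) ((k : ℤ) - m * (n - j)) (r - ℓ) *
              gbZ (Fintype.card F) (Module.finrank F (codeSub (dualCode C) (perp J))) ℓ := by
    intro J hJ
    rw [finrank_codeSub_eq, hk, hJ, gbZ_add_natCast_eq_sum hq]
  rw [Bcoef, finsum_mem_congr rfl hterm, finsum_mem_finsetSum_comm (Set.toFinite _)]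
  refine sum_congr rfl fun ℓ _ => ?_
  rw [Bcoef_sub_eq_finsum_perp _ hj, mul_finsum_mem]

/-- MacWilliams identity for the generalized binomial moments. -/
theorem macwilliams_binomial_moments (n m : ℕ)
    (C : Submodule F (Matrix (Fin n) (Fin m) F)) (k : ℕ)
    (hk : Module.finrank F C = k) (j r : ℕ) (hj : j ≤ n) (hr : r ≤ k) :
    Bcoef C r j
      = ∑ ℓ ∈ Finset.range (r + 1),
          (Fintype.card F : ℚ) ^
              ((ℓ : ℤ) * ((k : ℤ) - (m : ℤ) * ((n : ℤ) - (j : ℤ)) - (r : ℤ) + (ℓ : ℤ))) *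
            gbZ (Fintype.card F) ((k : ℤ) - (m : ℤ) * ((n : ℤ) - (j : ℤ))) (r - ℓ) *
            Bcoef (dualCode C) ℓ (n - j) :=
  macwilliams_binomial_moments_general n m C k hk j r hj
end
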